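/- If f : A → B is a fibration in a tribe E, then the summation functor Σ_f : E(A) → E(B), (X, p) ↦ (X, f∘p), preserves and reflects homotopy equivalences: a morphism w of E(A) is a homotopy equivalence in the tribe E(A) if and only if Σ_f(w) is a homotopy equivalence in the tribe E(B). -/

import Mathlib

open CategoryTheory CategoryTheory.Limits

universe w v u v' u' v'' u''

/-- A *clan* structure on a category `E`: a terminal object together with a class of
maps (the *fibrations*) containing the isomorphisms, closed under composition and
base changes (every fibration is carrable and any pullback of a fibration is a
fibration), and containing every map to the terminal object. -/
structure Clan (E : Type u) [Category.{v} E] where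
  fib : MorphismProperty E
  one : E
  one_isTerminal : IsTerminal one
  fib_of_isIso : ∀ ⦃A B : E⦄ (f : A ⟶ B), IsIso f → fib f
  fib_comp : ∀ ⦃A B C : E⦄ {f : A ⟶ B} {g : B ⟶ C}, fib f → fib g → fib (f ≫ g)
  carrable : ∀ ⦃A B X : E⦄ (f : A ⟶ B) ⦃p : X ⟶ B⦄, fib p →
    ∃ (P : E) (p₁ : P ⟶ A) (p₂ : P ⟶ X), IsPullback p₁ p₂ f p
  fib_baseChange : ∀ ⦃P A X B : E⦄ {p₁ : P ⟶ A} {p₂ : P ⟶ X} {f : A ⟶ B} {p : X ⟶ B},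
    IsPullback p₁ p₂ f p → fib p → fib p₁
  fib_toOne : ∀ X : E, fib (one_isTerminal.from X)

/-- A *morphism of clans* is a functor taking fibrations to fibrations, preserving
base changes of fibrations, and taking the terminal object to a terminal object. -/
structure IsClanMorphism {E : Type u} {E' : Type u'} [Category.{v} E] [Category.{v'} E']
    (C : Clan E) (D : Clan E') (F : E ⥤ E') : Prop where
  map_fib : ∀ ⦃A B : E⦄ (f : A ⟶ B), C.fib f → D.fib (F.map f)
  map_isPullback : ∀ ⦃P A X B : E⦄ {p₁ : P ⟶ A} {p₂ : P ⟶ X} {f : A ⟶ B} {p : X ⟶ B},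
    IsPullback p₁ p₂ f p → C.fib p →
      IsPullback (F.map p₁) (F.map p₂) (F.map f) (F.map p)
  preserves_terminal : Nonempty (IsTerminal (F.obj C.one))

/-- The local category `E(A)`: the full subcategory of `Over A` spanned by the
fibrations `X ↠ A`. -/
abbrev ClanSlice {E : Type u} [Category.{v} E] (C : Clan E) (A : E) :=
  ObjectProperty.FullSubcategory (fun X : Over A => C.fib X.hom)

/-- The underlying morphism of `Over A` of a morphism of `ClanSlice C A`. -/
def ClanSlice.homOf {E : Type u} [Category.{v} E] {C : Clan E} {A : E}
    {X Y : ClanSlice C A} (u : X ⟶ Y) : X.obj ⟶ Y.obj := u.hom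

/-- A map in a clan is *anodyne* if it has the left lifting property with respect to
every fibration. -/
def Anodyne {E : Type u} [Category.{v} E] (C : Clan E) : MorphismProperty E :=
  fun _ _ u => ∀ ⦃X Y : E⦄ (f : X ⟶ Y), C.fib f → HasLiftingProperty u f

/-- A *tribe* is a clan in which every map factors as an anodyne map followed by a
fibration, and every base change of an anodyne map along a fibration is anodyne. -/
structure Tribe (E : Type u) [Category.{v} E] extends Clan E where
  exists_fact : ∀ ⦃A B : E⦄ (f : A ⟶ B), ∃ (Z : E) (u : A ⟶ Z) (p : Z ⟶ B),
    Anodyne toClan u ∧ fib p ∧ u ≫ p = f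
  anodyne_baseChange : ∀ ⦃P A X B : E⦄ {p₁ : P ⟶ A} {p₂ : P ⟶ X} {f : A ⟶ B} {u : X ⟶ B},
    IsPullback p₁ p₂ f u → fib f → Anodyne toClan u → Anodyne toClan p₁

/-- A *path object* for `B`: a factorization of the diagonal `B ⟶ B × B` as an
anodyne map `σ` followed by a fibration `(∂₀, ∂₁)`.  The product `B × B` is
witnessed by a pullback square over the terminal object. -/
structure PathObj {E : Type u} [Category.{v} E] (T : Tribe E) (B : E) where
  P : E
  σ : B ⟶ P
  d₀ : P ⟶ B
  d₁ : P ⟶ B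
  σ_d₀ : σ ≫ d₀ = 𝟙 B
  σ_d₁ : σ ≫ d₁ = 𝟙 B
  anodyne_σ : Anodyne T.toClan σ
  BB : E
  pr₁ : BB ⟶ B
  pr₂ : BB ⟶ B
  isProd : IsPullback pr₁ pr₂ (T.one_isTerminal.from B) (T.one_isTerminal.from B)
  pair : P ⟶ BB
  pair_pr₁ : pair ≫ pr₁ = d₀
  pair_pr₂ : pair ≫ pr₂ = d₁
  fib_pair : T.fib pair

/-- Two maps `f g : A ⟶ B` in a tribe are *homotopic* if there are a path object for
`B` and a homotopy `H : A ⟶ PB` with `∂₀ ∘ H = f` and `∂₁ ∘ H = g`. -/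
def Homotopic {E : Type u} [Category.{v} E] (T : Tribe E) {A B : E} (f g : A ⟶ B) : Prop :=
  ∃ (Q : PathObj T B) (H : A ⟶ Q.P), H ≫ Q.d₀ = f ∧ H ≫ Q.d₁ = g

/-- A map is a *homotopy equivalence* if it admits a homotopy inverse. -/
def IsHomotopyEquiv {E : Type u} [Category.{v} E] (T : Tribe E) {X Y : E} (f : X ⟶ Y) : Prop :=
  ∃ g : Y ⟶ X, Homotopic T (f ≫ g) (𝟙 X) ∧ Homotopic T (g ≫ f) (𝟙 Y)

/-- The local category `E(A)` of a tribe: the full subcategory of `Over A` spanned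
by the fibrations `X ↠ A`. -/
abbrev TribeSlice {E : Type u} [Category.{v} E] (T : Tribe E) (A : E) :=
  ObjectProperty.FullSubcategory (fun X : Over A => T.fib X.hom)

/-- The underlying morphism of `Over A` of a morphism of `TribeSlice T A`. -/
def TribeSlice.homOf {E : Type u} [Category.{v} E] {T : Tribe E} {A : E}
    {X Y : TribeSlice T A} (u : X ⟶ Y) : X.obj ⟶ Y.obj := u.hom

/-- A *morphism of tribes* is a morphism of clans that moreover takes anodyne maps
to anodyne maps. -/
structure IsTribeMorphism {E : Type u} {E' : Type u'} [Category.{v} E] [Category.{v'} E']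
    (T : Tribe E) (T' : Tribe E') (F : E ⥤ E')
    extends IsClanMorphism T.toClan T'.toClan F : Prop where
  map_anodyne : ∀ ⦃A B : E⦄ (u : A ⟶ B), Anodyne T.toClan u → Anodyne T'.toClan (F.map u)

/-- The homotopy relation, as a `HomRel`; the homotopy category `Ho(E)` is the
quotient of `E` by this congruence. -/
def HoRel {E : Type u} [Category.{v} E] (T : Tribe E) : HomRel E :=
  fun {_ _} f g => Homotopic T f g

/-!
Both sides say that the underlying map of `w` is a homotopy equivalence in `E`. A path object
in a slice forgets to an anodyne map with two retractions, and any such datum yields homotopies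
in `E`; so slice homotopies are homotopies in `E`. Conversely, factor a map of the slice as an
anodyne map followed by a fibration `p` that is a homotopy equivalence in `E`. Then `p` has a
section, and factoring that section as an anodyne map followed by a fibration `q` makes `q ≫ p`
a fibration with an anodyne section. Such a fibration is a homotopy equivalence in the slice, by
path lifting in a path object over its base. Doing this twice and using two-out-of-six shows
that `p` is a homotopy equivalence in the slice.
-/

section

variable {E : Type u} [Category.{v} E] {T : Tribe E}

/-- `j` is the base change of `σ` along the fibration `q₁`, by pasting pullbacks. -/
theorem anodyne_of_isPullback_section {B P X Z : E} {σ : B ⟶ P} (hσ : Anodyne T.toClan σ)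
    {d : P ⟶ B} (hd : σ ≫ d = 𝟙 B) {p : X ⟶ B} (hp : T.fib p) {q₁ : Z ⟶ P} {q₂ : Z ⟶ X}
    (pb : IsPullback q₁ q₂ d p) {j : X ⟶ Z} (hj₁ : j ≫ q₁ = p ≫ σ) (hj₂ : j ≫ q₂ = 𝟙 X) :
    Anodyne T.toClan j :=
  T.anodyne_baseChange
    (IsPullback.of_right (by rw [hj₂, hd]; exact IsPullback.of_id_fst) hj₁ pb.flip)
    (T.fib_baseChange pb hp) hσ

theorem Tribe.nonempty_pathObj (T : Tribe E) (B : E) : Nonempty (PathObj T B) := by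
  obtain ⟨BB, pr₁, pr₂, hpb⟩ := T.carrable (T.one_isTerminal.from B) (T.fib_toOne B)
  obtain ⟨P, σ, pair, hσ, hpair, hσpair⟩ := T.exists_fact (hpb.lift (𝟙 B) (𝟙 B) rfl)
  exact ⟨⟨P, σ, pair ≫ pr₁, pair ≫ pr₂, by rw [← Category.assoc, hσpair, hpb.lift_fst],
    by rw [← Category.assoc, hσpair, hpb.lift_snd], hσ, BB, pr₁, pr₂, hpb, pair, rfl, rfl,
    hpair⟩⟩

end

namespace PathObj

variable {E : Type u} [Category.{v} E] {T : Tribe E} {B : E}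

def flip (Q : PathObj T B) : PathObj T B where
  P := Q.P
  σ := Q.σ
  d₀ := Q.d₁
  d₁ := Q.d₀
  σ_d₀ := Q.σ_d₁
  σ_d₁ := Q.σ_d₀
  anodyne_σ := Q.anodyne_σ
  BB := Q.BB
  pr₁ := Q.pr₂
  pr₂ := Q.pr₁
  isProd := Q.isProd.flip
  pair := Q.pair
  pair_pr₁ := Q.pair_pr₂
  pair_pr₂ := Q.pair_pr₁
  fib_pair := Q.fib_pair

theorem fib_d₀ (Q : PathObj T B) : T.fib Q.d₀ := by
  rw [← Q.pair_pr₁]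
  exact T.fib_comp Q.fib_pair (T.fib_baseChange Q.isProd (T.fib_toOne B))

theorem exists_extension_of_anodyne (Q : PathObj T B) {Z W : E} {j : Z ⟶ W}
    (hj : Anodyne T.toClan j) {a b : W ⟶ B} (K₀ : Z ⟶ Q.P)
    (h₀ : K₀ ≫ Q.d₀ = j ≫ a) (h₁ : K₀ ≫ Q.d₁ = j ≫ b) :
    ∃ K : W ⟶ Q.P, K ≫ Q.d₀ = a ∧ K ≫ Q.d₁ = b := by
  have := hj _ Q.fib_pair
  have sq : CommSq K₀ j Q.pair (Q.isProd.lift a b (T.one_isTerminal.hom_ext _ _)) :=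
    ⟨Q.isProd.hom_ext
      (by rw [Category.assoc, Category.assoc, Q.pair_pr₁, Q.isProd.lift_fst, h₀])
      (by rw [Category.assoc, Category.assoc, Q.pair_pr₂, Q.isProd.lift_snd, h₁])⟩
  refine ⟨sq.lift, ?_, ?_⟩
  · rw [← Q.pair_pr₁, ← Category.assoc, sq.fac_right, Q.isProd.lift_fst]
  · rw [← Q.pair_pr₂, ← Category.assoc, sq.fac_right, Q.isProd.lift_snd]

theorem exists_transport (Q : PathObj T B) {W Z : E} {π : W ⟶ B} (hπ : T.fib π)
    {e : Z ⟶ W} {K : Z ⟶ Q.P} (hK : K ≫ Q.d₀ = e ≫ π) :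
    ∃ H : Z ⟶ W, H ≫ π = K ≫ Q.d₁ := by
  obtain ⟨R, r₁, r₂, pbR⟩ := T.carrable Q.d₀ hπ
  obtain ⟨j, hj₁, hj₂⟩ := pbR.exists_lift (π ≫ Q.σ) (𝟙 W)
    (by rw [Category.assoc, Q.σ_d₀, Category.comp_id, Category.id_comp])
  have := anodyne_of_isPullback_section Q.anodyne_σ Q.σ_d₀ hπ pbR hj₁ hj₂ _ hπ
  have sq : CommSq (𝟙 W) j π (r₁ ≫ Q.d₁) :=
    ⟨by rw [Category.id_comp, reassoc_of% hj₁, Q.σ_d₁, Category.comp_id]⟩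
  exact ⟨pbR.lift K e hK ≫ sq.lift, by
    rw [Category.assoc, sq.fac_right, ← Category.assoc, pbR.lift_fst]⟩

end PathObj

namespace Homotopic

variable {E : Type u} [Category.{v} E] {T : Tribe E} {A B : E}

theorem of_eq {f g : A ⟶ B} (h : f = g) : Homotopic T f g := by
  obtain ⟨Q⟩ := T.nonempty_pathObj B
  exact ⟨Q, f ≫ Q.σ, by rw [Category.assoc, Q.σ_d₀, Category.comp_id],
    by rw [Category.assoc, Q.σ_d₁, Category.comp_id, h]⟩

theorem symm {f g : A ⟶ B} (h : Homotopic T f g) : Homotopic T g f := by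
  obtain ⟨Q, H, h₀, h₁⟩ := h
  exact ⟨Q.flip, H, h₁, h₀⟩

theorem comp_left {f g : A ⟶ B} (h : Homotopic T f g) {A' : E} (u : A' ⟶ A) :
    Homotopic T (u ≫ f) (u ≫ g) := by
  obtain ⟨Q, H, h₀, h₁⟩ := h
  exact ⟨Q, u ≫ H, by rw [Category.assoc, h₀], by rw [Category.assoc, h₁]⟩

theorem of_anodyne_comp_eq {Z : E} {j : Z ⟶ A} (hj : Anodyne T.toClan j) {a b : A ⟶ B}
    (h : j ≫ a = j ≫ b) : Homotopic T a b := by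
  obtain ⟨Q⟩ := T.nonempty_pathObj B
  obtain ⟨K, hK₀, hK₁⟩ := Q.exists_extension_of_anodyne hj (a := a) (b := b) (j ≫ a ≫ Q.σ)
    (by rw [Category.assoc, Category.assoc, Q.σ_d₀, Category.comp_id])
    (by rw [Category.assoc, Category.assoc, Q.σ_d₁, Category.comp_id, h])
  exact ⟨Q, K, hK₀, hK₁⟩

theorem comp_right {f g : A ⟶ B} (h : Homotopic T f g) {B' : E} (v : B ⟶ B') :
    Homotopic T (f ≫ v) (g ≫ v) := by
  obtain ⟨Q, H, rfl, rfl⟩ := h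
  have hd : Homotopic T (Q.d₀ ≫ v) (Q.d₁ ≫ v) := of_anodyne_comp_eq Q.anodyne_σ
    (by rw [← Category.assoc, Q.σ_d₀, ← Category.assoc, Q.σ_d₁])
  simpa only [Category.assoc] using hd.comp_left H

theorem exists_of_pathObj {f g : A ⟶ B} (h : Homotopic T f g) (Q' : PathObj T B) :
    ∃ K : A ⟶ Q'.P, K ≫ Q'.d₀ = f ∧ K ≫ Q'.d₁ = g := by
  obtain ⟨Q, H, rfl, rfl⟩ := h
  obtain ⟨θ, hθ₀, hθ₁⟩ := Q'.exists_extension_of_anodyne Q.anodyne_σ Q'.σ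
    (by rw [Q'.σ_d₀, Q.σ_d₀]) (by rw [Q'.σ_d₁, Q.σ_d₁])
  exact ⟨H ≫ θ, by rw [Category.assoc, hθ₀], by rw [Category.assoc, hθ₁]⟩

/-- Composition of paths: extend the identity of `Q.P` along the anodyne inclusion of
`Q.P` into `Q.P ×_B Q.P` as the pairs `(d₀ ≫ σ, 𝟙)`. -/
theorem trans {f g h : A ⟶ B} (hfg : Homotopic T f g) (hgh : Homotopic T g h) :
    Homotopic T f h := by
  obtain ⟨Q⟩ := T.nonempty_pathObj B
  obtain ⟨K₁, hK₁₀, hK₁₁⟩ := hfg.exists_of_pathObj Q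
  obtain ⟨K₂, hK₂₀, hK₂₁⟩ := hgh.exists_of_pathObj Q
  obtain ⟨V, v₁, v₂, pbV⟩ := T.carrable Q.d₁ Q.fib_d₀
  obtain ⟨i, hi₁, hi₂⟩ := pbV.exists_lift (Q.d₀ ≫ Q.σ) (𝟙 Q.P)
    (by rw [Category.assoc, Q.σ_d₁, Category.comp_id, Category.id_comp])
  obtain ⟨K, hK₀, hK₁⟩ := Q.exists_extension_of_anodyne
    (anodyne_of_isPullback_section Q.anodyne_σ Q.σ_d₁ Q.fib_d₀ pbV hi₁ hi₂) (𝟙 Q.P)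
    (a := v₁ ≫ Q.d₀) (b := v₂ ≫ Q.d₁)
    (by rw [Category.id_comp, reassoc_of% hi₁, Q.σ_d₀, Category.comp_id])
    (by rw [Category.id_comp, reassoc_of% hi₂])
  refine ⟨Q, pbV.lift K₁ K₂ (by rw [hK₁₁, hK₂₀]) ≫ K, ?_, ?_⟩
  · rw [Category.assoc, hK₀, pbV.lift_fst_assoc, hK₁₀]
  · rw [Category.assoc, hK₁, pbV.lift_snd_assoc, hK₂₁]

end Homotopic

namespace IsHomotopyEquiv

variable {E : Type u} [Category.{v} E] {T : Tribe E}

theorem id (X : E) : IsHomotopyEquiv T (𝟙 X) :=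
  ⟨𝟙 X, .of_eq (Category.comp_id _), .of_eq (Category.comp_id _)⟩

theorem comp {X Y Z : E} {a : X ⟶ Y} {b : Y ⟶ Z} (ha : IsHomotopyEquiv T a)
    (hb : IsHomotopyEquiv T b) : IsHomotopyEquiv T (a ≫ b) := by
  obtain ⟨a', ha₁, ha₂⟩ := ha
  obtain ⟨b', hb₁, hb₂⟩ := hb
  refine ⟨b' ≫ a', ?_, ?_⟩
  · have h := (hb₁.comp_right a').comp_left a
    simp only [Category.assoc, Category.id_comp] at h ⊢
    exact h.trans ha₁
  · have h := (ha₂.comp_right b).comp_left b'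
    simp only [Category.assoc, Category.id_comp] at h ⊢
    exact h.trans hb₂

theorem of_comp_left {X Y Z : E} {a : X ⟶ Y} {b : Y ⟶ Z} (ha : IsHomotopyEquiv T a)
    (hab : IsHomotopyEquiv T (a ≫ b)) : IsHomotopyEquiv T b := by
  obtain ⟨a', -, ha₂⟩ := ha
  obtain ⟨m, hm₁, hm₂⟩ := hab
  refine ⟨m ≫ a, ?_, by simpa only [Category.assoc] using hm₂⟩
  have h₁ : Homotopic T (b ≫ m ≫ a) (a' ≫ a ≫ b ≫ m ≫ a) := by
    simpa only [Category.assoc, Category.id_comp] using ha₂.symm.comp_right (b ≫ m ≫ a)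
  have h₂ : Homotopic T (a' ≫ a ≫ b ≫ m ≫ a) (a' ≫ a) := by
    simpa only [Category.assoc, Category.id_comp] using (hm₁.comp_right a).comp_left a'
  exact (h₁.trans h₂).trans ha₂

theorem of_comp_right {X Y Z : E} {a : X ⟶ Y} {b : Y ⟶ Z} (hb : IsHomotopyEquiv T b)
    (hab : IsHomotopyEquiv T (a ≫ b)) : IsHomotopyEquiv T a := by
  obtain ⟨b', hb₁, -⟩ := hb
  obtain ⟨m, hm₁, hm₂⟩ := hab
  refine ⟨b ≫ m, by simpa only [Category.assoc] using hm₁, ?_⟩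
  have h₁ : Homotopic T ((b ≫ m) ≫ a) (b ≫ m ≫ a ≫ b ≫ b') := by
    simpa only [Category.assoc, Category.comp_id] using hb₁.symm.comp_left (b ≫ m ≫ a)
  have h₂ : Homotopic T (b ≫ m ≫ a ≫ b ≫ b') (b ≫ b') := by
    simpa only [Category.assoc, Category.id_comp] using (hm₂.comp_right b').comp_left b
  exact (h₁.trans h₂).trans hb₁

theorem of_two_out_of_six {W X Y Z : E} {a : W ⟶ X} {b : X ⟶ Y} {c : Y ⟶ Z}
    (hab : IsHomotopyEquiv T (a ≫ b)) (hbc : IsHomotopyEquiv T (b ≫ c)) :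
    IsHomotopyEquiv T b := by
  obtain ⟨m, -, hm₂⟩ := hab
  obtain ⟨n, hn₁, -⟩ := hbc
  have hr : Homotopic T ((m ≫ a) ≫ b) (𝟙 Y) := by simpa only [Category.assoc] using hm₂
  have hl : Homotopic T (b ≫ c ≫ n) (𝟙 X) := by simpa only [Category.assoc] using hn₁
  have h₁ : Homotopic T (c ≫ n) ((m ≫ a) ≫ b ≫ c ≫ n) := by
    simpa only [Category.assoc, Category.id_comp] using hr.symm.comp_right (c ≫ n)
  have h₂ : Homotopic T ((m ≫ a) ≫ b ≫ c ≫ n) (m ≫ a) := by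
    simpa only [Category.comp_id] using hl.comp_left (m ≫ a)
  exact ⟨c ≫ n, hl, ((h₁.trans h₂).comp_right b).trans hr⟩

theorem of_anodyne {X Y : E} {j : X ⟶ Y} (hj : Anodyne T.toClan j) : IsHomotopyEquiv T j := by
  have := hj _ (T.fib_toOne X)
  have sq : CommSq (𝟙 X) j (T.one_isTerminal.from X) (T.one_isTerminal.from Y) :=
    ⟨T.one_isTerminal.hom_ext _ _⟩
  exact ⟨sq.lift, .of_eq sq.fac_left, .of_anodyne_comp_eq hj
    (by rw [reassoc_of% sq.fac_left, Category.comp_id])⟩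

theorem exists_section {X Y : E} {p : X ⟶ Y} (hp : T.fib p) (h : IsHomotopyEquiv T p) :
    ∃ s : Y ⟶ X, s ≫ p = 𝟙 Y := by
  obtain ⟨g, -, Q, K, hK₀, hK₁⟩ := h
  obtain ⟨s, hs⟩ := Q.exists_transport hp hK₀
  exact ⟨s, hs.trans hK₁⟩

end IsHomotopyEquiv

/-- `W` is a path object for `M` in the slice over `Y`, and `H` a homotopy over `Y` from
`P ≫ σ` to `𝟙 M`: the maps `(1, 1), (P ≫ σ, 1) : M ⟶ M ×_Y M` agree on the anodyne `σ`, so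
they are homotopic, and transporting along `W ↠ M ×_Y M` gives `H`. -/
theorem exists_fibrewise_homotopy_of_anodyne_section {E : Type u} [Category.{v} E]
    {T : Tribe E} {M Y : E} {P : M ⟶ Y} (hP : T.fib P) {σ : Y ⟶ M}
    (hσ : Anodyne T.toClan σ) (hσP : σ ≫ P = 𝟙 Y) :
    ∃ (W : E) (s : M ⟶ W) (w₀ w₁ : W ⟶ M) (H : M ⟶ W), Anodyne T.toClan s ∧ T.fib w₁ ∧
      w₀ ≫ P = w₁ ≫ P ∧ s ≫ w₀ = 𝟙 M ∧ s ≫ w₁ = 𝟙 M ∧ H ≫ w₀ = P ≫ σ ∧ H ≫ w₁ = 𝟙 M := by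
  obtain ⟨V, pr₀, pr₁, pbV⟩ := T.carrable P hP
  obtain ⟨δ, hδ₀, hδ₁⟩ := pbV.exists_lift (𝟙 M) (𝟙 M) rfl
  obtain ⟨ε, hε₀, hε₁⟩ := pbV.exists_lift (P ≫ σ) (𝟙 M)
    (by rw [Category.assoc, hσP, Category.comp_id, Category.id_comp])
  obtain ⟨W, s, π, hs, hπ, hsπ⟩ := T.exists_fact δ
  obtain ⟨Q, K, hK₀, hK₁⟩ : Homotopic T δ ε := .of_anodyne_comp_eq hσ <| pbV.hom_ext
    (by rw [Category.assoc, Category.assoc, hδ₀, hε₀, reassoc_of% hσP, Category.comp_id])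
    (by rw [Category.assoc, Category.assoc, hδ₁, hε₁])
  obtain ⟨H, hH⟩ := Q.exists_transport hπ (e := s) (hK₀.trans hsπ.symm)
  refine ⟨W, s, π ≫ pr₀, π ≫ pr₁, H, hs, T.fib_comp hπ (T.fib_baseChange pbV.flip hP),
    by rw [Category.assoc, Category.assoc, pbV.w], ?_, ?_, ?_, ?_⟩
  · rw [reassoc_of% hsπ, hδ₀]
  · rw [reassoc_of% hsπ, hδ₁]
  · rw [reassoc_of% hH, reassoc_of% hK₁, hε₀]
  · rw [reassoc_of% hH, reassoc_of% hK₁, hε₁]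

namespace TribeSlice

variable {E : Type u} [Category.{v} E] {T : Tribe E} {C : E}

-- reducible, so that `rw` sees `(mk p hp).obj.left` as `Z`
abbrev mk {Z : E} (p : Z ⟶ C) (hp : T.fib p) : TribeSlice T C := ⟨Over.mk p, hp⟩

def homMk {X Y : TribeSlice T C} (g : X.obj.left ⟶ Y.obj.left)
    (w : g ≫ Y.obj.hom = X.obj.hom) : X ⟶ Y :=
  ObjectProperty.homMk (Over.homMk g w)

theorem comp_left {X Y Z : TribeSlice T C} (u : X ⟶ Y) (v : Y ⟶ Z) :
    (homOf (u ≫ v)).left = (homOf u).left ≫ (homOf v).left := rfl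

theorem w {X Y : TribeSlice T C} (u : X ⟶ Y) : (homOf u).left ≫ Y.obj.hom = X.obj.hom :=
  Over.w u.hom

theorem hom_ext {X Y : TribeSlice T C} {u v : X ⟶ Y}
    (h : (homOf u).left = (homOf v).left) : u = v :=
  ObjectProperty.hom_ext _ (Over.OverMorphism.ext h)

theorem left_congr {X Y : TribeSlice T C} {u v : X ⟶ Y} (h : u = v) :
    (homOf u).left = (homOf v).left := h ▸ rfl

def HasUnderlyingFib (TS : Tribe (TribeSlice T C)) : Prop :=
  ∀ {U V : TribeSlice T C} (u : U ⟶ V), TS.fib u ↔ T.fib (homOf u).left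

variable {TS : Tribe (TribeSlice T C)}

theorem hasLiftingProperty_left_of_anodyne (hTS : HasUnderlyingFib TS)
    {X Y : TribeSlice T C} {u : X ⟶ Y} (hu : Anodyne TS.toClan u) {Z Z' : E} {p : Z ⟶ Z'}
    (hp : T.fib p) : HasLiftingProperty (homOf u).left p := by
  refine ⟨fun {a b} sq => ?_⟩
  -- the base change `r₁` of `p` along `b` is a fibration of the slice, so `u` lifts against it
  obtain ⟨R, r₁, r₂, pbR⟩ := T.carrable b hp
  have hr₁ : T.fib r₁ := T.fib_baseChange pbR hp
  have hR := T.fib_comp hr₁ Y.property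
  let r : mk (r₁ ≫ Y.obj.hom) hR ⟶ Y := homMk r₁ rfl
  obtain ⟨l, hl₁, hl₂⟩ := pbR.exists_lift (homOf u).left a sq.w.symm
  let l' : X ⟶ mk (r₁ ≫ Y.obj.hom) hR :=
    homMk l (by simp only [Over.mk_hom, ← Category.assoc, hl₁, w u])
  have := hu r ((hTS r).2 hr₁)
  have sq' : CommSq l' u r (𝟙 Y) := ⟨by rw [Category.comp_id]; exact hom_ext hl₁⟩
  have hlift : (homOf sq'.lift).left ≫ r₁ = 𝟙 Y.obj.left := left_congr sq'.fac_right
  have hlift' : (homOf u).left ≫ (homOf sq'.lift).left = l := left_congr sq'.fac_left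
  refine .mk' ⟨(homOf sq'.lift).left ≫ r₂, ?_, ?_⟩
  · rw [← Category.assoc, hlift', hl₂]
  · rw [Category.assoc, ← pbR.w, ← Category.assoc, hlift, Category.id_comp]

theorem anodyne_left (hTS : HasUnderlyingFib TS)
    {X Y : TribeSlice T C} {u : X ⟶ Y} (hu : Anodyne TS.toClan u) :
    Anodyne T.toClan (homOf u).left :=
  fun _ _ _ hp => hasLiftingProperty_left_of_anodyne hTS hu hp

theorem anodyne_of_anodyne_left (hTS : HasUnderlyingFib TS)
    {X Y : TribeSlice T C} {u : X ⟶ Y} (hu : Anodyne T.toClan (homOf u).left) :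
    Anodyne TS.toClan u := by
  intro Z Z' p hp
  have := hu _ ((hTS p).1 hp)
  refine ⟨fun {a b} sq => ?_⟩
  have sq' : CommSq (homOf a).left (homOf u).left (homOf p).left (homOf b).left :=
    ⟨left_congr sq.w⟩
  let l : Y ⟶ Z := homMk sq'.lift (by rw [← w p, reassoc_of% sq'.fac_right, w b])
  exact .mk' ⟨l, hom_ext sq'.fac_left, hom_ext sq'.fac_right⟩

theorem homotopic_left (hTS : HasUnderlyingFib TS)
    {X Y : TribeSlice T C} {f g : X ⟶ Y} (h : Homotopic TS f g) :
    Homotopic T (homOf f).left (homOf g).left := by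
  obtain ⟨Q, H, rfl, rfl⟩ := h
  have hd : Homotopic T (homOf Q.d₀).left (homOf Q.d₁).left :=
    .of_anodyne_comp_eq (anodyne_left hTS Q.anodyne_σ)
      (by rw [← comp_left, ← comp_left, Q.σ_d₀, Q.σ_d₁])
  exact hd.comp_left (homOf H).left

theorem isHomotopyEquiv_of_fib_of_anodyne_section (hTS : HasUnderlyingFib TS)
    {M Y : TribeSlice T C} {P : M ⟶ Y} (hP : TS.fib P) {σ : Y ⟶ M}
    (hσ : Anodyne TS.toClan σ) (hσP : σ ≫ P = 𝟙 Y) : IsHomotopyEquiv TS P := by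
  obtain ⟨W, s, w₀, w₁, H, hs, hw₁, hw, hs₀, hs₁, hH₀, hH₁⟩ :=
    exists_fibrewise_homotopy_of_anodyne_section ((hTS P).1 hP) (anodyne_left hTS hσ)
      (left_congr hσP)
  have hW := T.fib_comp hw₁ M.property
  let w₀' : mk (w₁ ≫ M.obj.hom) hW ⟶ M :=
    homMk w₀ (by simp only [Over.mk_hom, ← w P, ← Category.assoc, hw])
  let w₁' : mk (w₁ ≫ M.obj.hom) hW ⟶ M := homMk w₁ rfl
  let s' : M ⟶ mk (w₁ ≫ M.obj.hom) hW :=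
    homMk s (by simp only [Over.mk_hom, ← Category.assoc, hs₁, Category.id_comp])
  let H' : M ⟶ mk (w₁ ≫ M.obj.hom) hW :=
    homMk H (by simp only [Over.mk_hom, ← Category.assoc, hH₁, Category.id_comp])
  have hw' : Homotopic TS w₀' w₁' :=
    .of_anodyne_comp_eq (j := s') (anodyne_of_anodyne_left hTS hs)
      (hom_ext (hs₀.trans hs₁.symm))
  refine ⟨σ, ?_, .of_eq hσP⟩
  convert hw'.comp_left H' using 1 <;> apply hom_ext
  exacts [hH₀.symm, hH₁.symm]

/-- `q` comes from factoring a section of `p` as an anodyne map followed by a fibration. -/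
theorem exists_fib_comp_isHomotopyEquiv (hTS : HasUnderlyingFib TS)
    {X Y : TribeSlice T C} {p : X ⟶ Y} (hp : TS.fib p) (h : IsHomotopyEquiv T (homOf p).left) :
    ∃ (Z : TribeSlice T C) (q : Z ⟶ X), TS.fib q ∧ IsHomotopyEquiv T (homOf q).left ∧
      IsHomotopyEquiv TS (q ≫ p) := by
  obtain ⟨s, hs⟩ := h.exists_section ((hTS p).1 hp)
  obtain ⟨Z, j, q, hj, hq, hjq⟩ := TS.exists_fact (homMk s (by rw [← w p, reassoc_of% hs]))
  have hsE : IsHomotopyEquiv T s := h.of_comp_right (hs ▸ .id _)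
  refine ⟨Z, q, hq, ?_, isHomotopyEquiv_of_fib_of_anodyne_section hTS (TS.fib_comp hq hp) hj
    (by rw [← Category.assoc, hjq]; exact hom_ext hs)⟩
  have hjqE : (homOf j).left ≫ (homOf q).left = s := left_congr hjq
  exact (IsHomotopyEquiv.of_anodyne (anodyne_left hTS hj)).of_comp_left (hjqE ▸ hsE)

theorem isHomotopyEquiv_of_fib (hTS : HasUnderlyingFib TS)
    {X Y : TribeSlice T C} {p : X ⟶ Y} (hp : TS.fib p) (h : IsHomotopyEquiv T (homOf p).left) :
    IsHomotopyEquiv TS p := by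
  obtain ⟨Z, q, hq, hqE, hqp⟩ := exists_fib_comp_isHomotopyEquiv hTS hp h
  obtain ⟨_, _, -, -, hq'q⟩ := exists_fib_comp_isHomotopyEquiv hTS hq hqE
  exact (IsHomotopyEquiv.of_two_out_of_six hq'q hqp).of_comp_left hqp

theorem isHomotopyEquiv_iff (hTS : HasUnderlyingFib TS)
    {X Y : TribeSlice T C} (u : X ⟶ Y) :
    IsHomotopyEquiv TS u ↔ IsHomotopyEquiv T (homOf u).left := by
  refine ⟨fun ⟨g, h₁, h₂⟩ => ⟨(homOf g).left, homotopic_left hTS h₁, homotopic_left hTS h₂⟩,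
    fun h => ?_⟩
  obtain ⟨Z, j, p, hj, hp, rfl⟩ := TS.exists_fact u
  have hjE := IsHomotopyEquiv.of_anodyne (anodyne_left hTS hj)
  exact (IsHomotopyEquiv.of_anodyne hj).comp (isHomotopyEquiv_of_fib hTS hp (hjE.of_comp_left h))

end TribeSlice

/-- If `f : A ⟶ B` is a fibration in a tribe `E`, then the summation
functor `Σ_f : E(A) ⥤ E(B)`, `(X, p) ↦ (X, p ≫ f)`, preserves and reflects homotopy
equivalences: a morphism `w` of `E(A)` is a homotopy equivalence in `E(A)` iff
`Σ_f w` is a homotopy equivalence in `E(B)`.  Here `TA` and `TB` are the canonical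
tribe structures on the local tribes `E(A)` and `E(B)`. -/
theorem summation_preserves_reflects_homotopyEquiv
    {E : Type u} [Category.{v} E] (T : Tribe E) {A B : E} (f : A ⟶ B) (hf : T.fib f)
    (TA : Tribe (TribeSlice T A)) (TB : Tribe (TribeSlice T B))
    (hTA : ∀ {U V : TribeSlice T A} (u : U ⟶ V),
      TA.fib u ↔ T.fib (TribeSlice.homOf u).left)
    (hTB : ∀ {U V : TribeSlice T B} (u : U ⟶ V),
      TB.fib u ↔ T.fib (TribeSlice.homOf u).left)
    {X Y : TribeSlice T A} (w : X ⟶ Y) :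
    IsHomotopyEquiv TA w ↔
      IsHomotopyEquiv TB
        (X := ⟨Over.mk (X.obj.hom ≫ f), T.fib_comp X.property hf⟩)
        (Y := ⟨Over.mk (Y.obj.hom ≫ f), T.fib_comp Y.property hf⟩)
        (ObjectProperty.homMk (Over.homMk (TribeSlice.homOf w).left (by simp))) := by
  rw [TribeSlice.isHomotopyEquiv_iff hTA, TribeSlice.isHomotopyEquiv_iff hTB]
  rfl
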